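/- Let h_2 = 2^{-η_2} be the dimension function of K(γ) built from δ_k with log(1/δ_k) = 2·log((k+5)!/5!) + A_j for k_j ≤ k < k_{j+1}, where A_j = 2^{k_j}·2^{-j} and 2^{-k_j}·2^j·k_{j+1}² → 0. Then η_2(t) - η_0(t) → ∞ as t → 0, where η_0(t) = (log log(1/t))/log 2; equivalently h_2(t) = o(h_0(t)) with h_0(t) = (log(1/t))^{-1}. -/

import Mathlib

/-!
On the block `k_j ≤ m < k_{j+1}` the factorial term of `log (1 / δ_m)` is at most
`2 (m + 5)² ≲ k_{j+1}²`, which the growth condition makes negligible against `A_j`. Hence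
`A_j ≤ log (1 / δ_m) ≤ 2 A_j = 2 ^ (k_j - j + 1)`. The lower bound forces `δ_m → 0`; the upper
one gives `η₀(δ_m) ≤ k_j - j + 1 ≤ m - j + 1`, while `η₂ ≥ m - 1` on `(δ_m, δ_{m-1}]`. So
`η₂ - η₀ ≥ j - 2` there, and the block index `j` tends to infinity as `t → 0`.
-/

open Real Set Filter Topology

theorem Monotone.exists_le_lt_succ {α : Type*} [LinearOrder α] {f : ℕ → α} (hf : Monotone f)
    {N : ℕ} {x : α} (hN : f N ≤ x) (hx : ∃ n, x < f n) :
    ∃ j, N ≤ j ∧ f j ≤ x ∧ x < f (j + 1) := by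
  classical
  have hNfind : N < Nat.find hx :=
    lt_of_not_ge fun h => (Nat.find_spec hx).not_ge ((hf h).trans hN)
  obtain ⟨j, hj⟩ := Nat.exists_eq_add_of_lt hNfind
  exact ⟨N + j, by omega, not_lt.1 (Nat.find_min hx (by omega)), hj ▸ Nat.find_spec hx⟩

theorem StrictMono.tendsto_atTop_of_forall_mem_Ico {β : Type*} [Preorder β] {n : ℕ → ℕ}
    (hn : StrictMono n) {u v : ℕ → β} (hv : Tendsto v atTop atTop)
    (huv : ∀ᶠ j in atTop, ∀ m ∈ Ico (n j) (n (j + 1)), v j ≤ u m) :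
    Tendsto u atTop atTop := by
  rw [Filter.tendsto_atTop]
  intro M
  obtain ⟨J, hJ⟩ := eventually_atTop.1 ((hv.eventually_ge_atTop M).and huv)
  filter_upwards [eventually_ge_atTop (n J)] with m hm
  obtain ⟨j, hJj, hjm, hmj⟩ := hn.monotone.exists_le_lt_succ hm
    ⟨m + 1, (Nat.lt_succ_self m).trans_le hn.le_apply⟩
  exact (hJ j hJj).1.trans ((hJ j hJj).2 m ⟨hjm, hmj⟩)

theorem tendsto_nhdsGT_zero_of_forall_mem_Ioc {β : Type*} [Preorder β] {δ : ℕ → ℝ}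
    (hδ : Antitone δ) (hδpos : ∀ k, 0 < δ k) (hδ0 : Tendsto δ atTop (𝓝 0)) {f : ℝ → β}
    {g : ℕ → β} (hg : Tendsto g atTop atTop)
    (hfg : ∀ᶠ k in atTop, ∀ t ∈ Ioc (δ (k + 1)) (δ k), g k ≤ f t) :
    Tendsto f (𝓝[>] 0) atTop := by
  rw [tendsto_atTop]
  intro M
  obtain ⟨N, hN⟩ := eventually_atTop.1 ((hg.eventually_ge_atTop M).and hfg)
  filter_upwards [Ioo_mem_nhdsGT (hδpos N)] with t ⟨ht0, htN⟩
  obtain ⟨k, hNk, htk, hkt⟩ := hδ.dual_right.exists_le_lt_succ (x := OrderDual.toDual t) htN.le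
    (hδ0.eventually (gt_mem_nhds ht0)).exists
  exact (hN k hNk).1.trans ((hN k hNk).2 t ⟨hkt, htk⟩)

theorem tendsto_zero_of_tendsto_log_one_div {α : Type*} {l : Filter α} {u : α → ℝ}
    (hu : ∀ a, 0 < u a) (h : Tendsto (fun a => log (1 / u a)) l atTop) :
    Tendsto u l (𝓝 0) :=
  (tendsto_exp_neg_atTop_nhds_zero.comp h).congr fun a => by
    simp only [Function.comp_apply, one_div, log_inv, neg_neg, exp_log (hu a)]

theorem Real.log_factorial_le_sq (n : ℕ) : log (n.factorial : ℝ) ≤ (n : ℝ) ^ 2 :=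
  calc log (n.factorial : ℝ)
      ≤ log ((n : ℝ) ^ n) := log_le_log (by positivity) (by exact_mod_cast n.factorial_le_pow)
    _ = n * log n := log_pow n n
    _ ≤ n * n := mul_le_mul_of_nonneg_left (log_le_self n.cast_nonneg) n.cast_nonneg
    _ = (n : ℝ) ^ 2 := (sq _).symm

theorem Real.logb_log_one_div_le_of_le {b s t : ℝ} (hb : 1 < b) (hs : 0 < s) (hst : s ≤ t)
    (ht : t < 1) : logb b (log (1 / t)) ≤ logb b (log (1 / s)) :=
  logb_le_logb_of_le hb (log_pos (one_lt_one_div (hs.trans_le hst) ht))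
    (log_le_log (one_div_pos.2 (hs.trans_le hst)) (one_div_le_one_div_of_le hs hst))

theorem nat_le_of_mem_Ioc {δ : ℕ → ℝ} {η : ℝ → ℝ} (hδpos : ∀ k, 0 < δ k)
    (hδdec : ∀ k, δ (k + 1) < δ k) (hη_node : ∀ k : ℕ, η (δ k) = k)
    (hη_aff : ∀ k : ℕ, ∀ t : ℝ, δ (k + 1) < t → t < δ k →
      η t = k + log (δ k / t) / log (δ k / δ (k + 1)))
    {k : ℕ} {t : ℝ} (ht : t ∈ Ioc (δ (k + 1)) (δ k)) : (k : ℝ) ≤ η t := by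
  obtain ⟨hlo, hhi⟩ := ht
  rcases hhi.lt_or_eq with hlt | rfl
  · rw [hη_aff k t hlo hlt, le_add_iff_nonneg_right]
    exact div_nonneg (log_nonneg ((one_le_div ((hδpos _).trans hlo)).2 hhi))
      (log_nonneg ((one_le_div (hδpos _)).2 (hδdec k).le))
  · exact (hη_node k).ge

section CantorSequence

variable {kj : ℕ → ℕ} {A δ : ℕ → ℝ}

theorem eventually_mul_sq_le (hA : ∀ j, A j = (2 : ℝ) ^ kj j / 2 ^ j)
    (hcond : Tendsto (fun j => (2 : ℝ) ^ j * (kj (j + 1) : ℝ) ^ 2 / 2 ^ kj j) atTop (𝓝 0))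
    {c : ℝ} (hc : 0 < c) : ∀ᶠ j in atTop, c * (kj (j + 1) : ℝ) ^ 2 ≤ A j := by
  filter_upwards [hcond.eventually (gt_mem_nhds (inv_pos.2 hc))] with j hj
  rw [div_lt_iff₀ (by positivity)] at hj
  rw [hA, le_div_iff₀ (by positivity)]
  calc c * (kj (j + 1) : ℝ) ^ 2 * 2 ^ j = c * (2 ^ j * (kj (j + 1) : ℝ) ^ 2) := by ring
    _ ≤ c * (c⁻¹ * 2 ^ kj j) := by gcongr
    _ = 2 ^ kj j := by field_simp

theorem log_one_div_mem_Icc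
    (hδ : ∀ j ≥ 1, ∀ k, kj j ≤ k → k < kj (j + 1) →
      log (1 / δ k) = 2 * log ((Nat.factorial (k + 5) : ℝ) / 120) + A j)
    {j m : ℕ} (hj : 1 ≤ j) (hm : m ∈ Ico (kj j) (kj (j + 1)))
    (hAj : 50 * (kj (j + 1) : ℝ) ^ 2 ≤ A j) :
    log (1 / δ m) ∈ Icc (A j) (2 * A j) := by
  rw [hδ j hj m hm.1 hm.2]
  have hfac_pos : (0 : ℝ) < (m + 5).factorial := by positivity
  have hfac_nonneg : 0 ≤ log (((m + 5).factorial : ℝ) / 120) := by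
    refine log_nonneg ((le_div_iff₀ (by norm_num)).2 ?_)
    rw [one_mul]
    exact_mod_cast Nat.factorial_le (show 5 ≤ m + 5 by omega)
  have hfac_le : log (((m + 5).factorial : ℝ) / 120) ≤ 25 * (kj (j + 1) : ℝ) ^ 2 :=
    calc log (((m + 5).factorial : ℝ) / 120)
        ≤ log ((m + 5).factorial : ℝ) :=
          log_le_log (by positivity) (div_le_self hfac_pos.le (by norm_num))
      _ ≤ ((m + 5 : ℕ) : ℝ) ^ 2 := log_factorial_le_sq _
      _ ≤ ((5 * kj (j + 1) : ℕ) : ℝ) ^ 2 := by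
          have := hm.2
          gcongr
          omega
      _ = 25 * (kj (j + 1) : ℝ) ^ 2 := by push_cast; ring
  constructor <;> linarith

theorem tendsto_log_one_div_atTop (hkj : StrictMono kj)
    (hδ : ∀ j ≥ 1, ∀ k, kj j ≤ k → k < kj (j + 1) →
      log (1 / δ k) = 2 * log ((Nat.factorial (k + 5) : ℝ) / 120) + A j)
    (hAbig : ∀ᶠ j in atTop, 50 * (kj (j + 1) : ℝ) ^ 2 ≤ A j) :
    Tendsto (fun m => log (1 / δ m)) atTop atTop := by
  refine hkj.tendsto_atTop_of_forall_mem_Ico tendsto_natCast_atTop_atTop ?_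
  filter_upwards [hAbig, eventually_ge_atTop 1] with j hAj hj m hm
  have hj_le : j ≤ 50 * kj (j + 1) ^ 2 :=
    (Nat.le_succ j).trans (hkj.le_apply.trans (Nat.le_self_pow two_ne_zero _)) |>.trans
      (Nat.le_mul_of_pos_left _ (by norm_num))
  calc (j : ℝ) ≤ 50 * (kj (j + 1) : ℝ) ^ 2 := by exact_mod_cast hj_le
    _ ≤ A j := hAj
    _ ≤ log (1 / δ m) := (log_one_div_mem_Icc hδ hj hm hAj).1

theorem tendsto_sub_logb_log_one_div (hkj : StrictMono kj) (hA : ∀ j, A j = (2 : ℝ) ^ kj j / 2 ^ j)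
    (hδ : ∀ j ≥ 1, ∀ k, kj j ≤ k → k < kj (j + 1) →
      log (1 / δ k) = 2 * log ((Nat.factorial (k + 5) : ℝ) / 120) + A j)
    (hAbig : ∀ᶠ j in atTop, 50 * (kj (j + 1) : ℝ) ^ 2 ≤ A j) :
    Tendsto (fun m : ℕ => (m : ℝ) - logb 2 (log (1 / δ m))) atTop atTop := by
  refine hkj.tendsto_atTop_of_forall_mem_Ico
    (tendsto_atTop_add_const_right _ (-1) tendsto_natCast_atTop_atTop) ?_
  filter_upwards [hAbig, eventually_ge_atTop 1] with j hAj hj m hm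
  obtain ⟨hlow, hup⟩ := log_one_div_mem_Icc hδ hj hm hAj
  have hApos : 0 < A j := by rw [hA]; positivity
  have hlogb : logb 2 (2 * A j) = 1 + kj j - j := by
    rw [hA, logb_mul two_ne_zero (by positivity), logb_div (by positivity) (by positivity),
      logb_pow, logb_pow, logb_self_eq_one one_lt_two]
    ring
  have hle := logb_le_logb_of_le one_lt_two (hApos.trans_le hlow) hup
  have hkjm : (kj j : ℝ) ≤ m := by exact_mod_cast hm.1
  linarith

end CantorSequence

theorem stmt12_general (kj : ℕ → ℕ) (hkjmono : StrictMono kj)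
    (A : ℕ → ℝ) (δ : ℕ → ℝ) (η₂ : ℝ → ℝ)
    (hA : ∀ j, A j = (2 : ℝ) ^ kj j / 2 ^ j)
    (hδpos : ∀ k, 0 < δ k) (hδdec : ∀ k, δ (k + 1) < δ k)
    (hδ : ∀ j ≥ 1, ∀ k, kj j ≤ k → k < kj (j + 1) →
      Real.log (1 / δ k) = 2 * Real.log ((Nat.factorial (k + 5) : ℝ) / 120) + A j)
    (hη_node : ∀ k : ℕ, η₂ (δ k) = k)
    (hη_aff : ∀ k : ℕ, ∀ t : ℝ, δ (k + 1) < t → t < δ k →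
      η₂ t = k + Real.log (δ k / t) / Real.log (δ k / δ (k + 1)))
    (hcond : Filter.Tendsto
      (fun j => (2 : ℝ) ^ j * (kj (j + 1) : ℝ) ^ 2 / 2 ^ kj j)
      Filter.atTop (nhds 0)) :
    Filter.Tendsto (fun t => η₂ t - Real.log (Real.log (1 / t)) / Real.log 2)
      (nhdsWithin 0 (Set.Ioi 0)) Filter.atTop := by
  have hAbig := eventually_mul_sq_le hA hcond (by norm_num : (0 : ℝ) < 50)
  have hδ0 : Tendsto δ atTop (𝓝 0) :=
    tendsto_zero_of_tendsto_log_one_div hδpos (tendsto_log_one_div_atTop hkjmono hδ hAbig)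
  have hgap := tendsto_atTop_add_const_right _ (-1)
    ((tendsto_sub_logb_log_one_div hkjmono hA hδ hAbig).comp (tendsto_add_atTop_nat 1))
  simp only [log_div_log]
  refine tendsto_nhdsGT_zero_of_forall_mem_Ioc (strictAnti_nat_of_succ_lt hδdec).antitone hδpos
    hδ0 hgap ?_
  filter_upwards [hδ0.eventually (gt_mem_nhds one_pos)] with k hk t ht
  have hη := nat_le_of_mem_Ioc hδpos hδdec hη_node hη_aff ht
  have hη₀ := logb_log_one_div_le_of_le one_lt_two (hδpos (k + 1)) ht.1.le (ht.2.trans_lt hk)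
  simp only [Function.comp_apply, Nat.cast_add, Nat.cast_one]
  linarith

/-- With δ_k given by log(1/δ_k) = 2log((k+5)!/5!) + A_j for k_j ≤ k < k_{j+1},
A_j = 2^{k_j}·2^{-j}, and 2^{-k_j}·2^j·k_{j+1}² → 0, the dimension function
η₂ of K(γ) satisfies η₂(t) - η₀(t) → ∞ as t → 0⁺, where
η₀(t) = log log(1/t)/log 2; equivalently h₂ = 2^{-η₂} = o(h₀). -/
theorem stmt12 (kj : ℕ → ℕ) (hkjmono : StrictMono kj) (hkj1 : 1 ≤ kj 1)
    (A : ℕ → ℝ) (δ : ℕ → ℝ) (η₂ : ℝ → ℝ)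
    (hA : ∀ j, A j = (2 : ℝ) ^ kj j / 2 ^ j)
    (hδpos : ∀ k, 0 < δ k) (hδdec : ∀ k, δ (k + 1) < δ k) (hδ0 : δ 0 = 1)
    (hδ : ∀ j ≥ 1, ∀ k, kj j ≤ k → k < kj (j + 1) →
      Real.log (1 / δ k) = 2 * Real.log ((Nat.factorial (k + 5) : ℝ) / 120) + A j)
    (hη_node : ∀ k : ℕ, η₂ (δ k) = k)
    (hη_aff : ∀ k : ℕ, ∀ t : ℝ, δ (k + 1) < t → t < δ k →
      η₂ t = k + Real.log (δ k / t) / Real.log (δ k / δ (k + 1)))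
    (hcond : Filter.Tendsto
      (fun j => (2 : ℝ) ^ j * (kj (j + 1) : ℝ) ^ 2 / 2 ^ kj j)
      Filter.atTop (nhds 0)) :
    Filter.Tendsto (fun t => η₂ t - Real.log (Real.log (1 / t)) / Real.log 2)
      (nhdsWithin 0 (Set.Ioi 0)) Filter.atTop :=
  stmt12_general kj hkjmono A δ η₂ hA hδpos hδdec hδ hη_node hη_aff hcond
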